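/- The rotation vector field X₃ = z∂_x - x∂_z satisfies [X₃, Y(g)] = Q(g) and [X₃, Q(k)] = -Y(k), where Y(g) = g(t)∂_x - (x/2)[g'(v∂_u - u∂_v) + g''∂_w] and Q(k) = k(t)∂_z - (z/2)[k'(v∂_u - u∂_v) + k''∂_w]. -/

import Mathlib

/-- Coordinates on ℝ⁷: indices 0..6 ↦ (t,x,y,z,u,v,w). -/
abbrev R7 := Fin 7 → ℝ

/-- Lie bracket of vector fields on ℝ⁷ (in coefficient form). -/
noncomputable def lieBracket (V W : R7 → R7) : R7 → R7 :=
  fun p => fderiv ℝ W p (V p) - fderiv ℝ V p (W p)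

/-- X₃ = z∂_x - x∂_z. -/
noncomputable def X₃ : R7 → R7 := fun p => ![0, p 3, 0, -p 1, 0, 0, 0]

/-- Y(g) = g(t)∂_x - (x/2)[g'(t)(v∂_u - u∂_v) + g''(t)∂_w]. -/
noncomputable def Yfield (g : ℝ → ℝ) : R7 → R7 :=
  fun p => ![0, g (p 0), 0, 0,
    -(p 1 / 2) * deriv g (p 0) * p 5,
    (p 1 / 2) * deriv g (p 0) * p 4,
    -(p 1 / 2) * deriv (deriv g) (p 0)]

/-- Q(k) = k(t)∂_z - (z/2)[k'(t)(v∂_u - u∂_v) + k''(t)∂_w]. -/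
noncomputable def Qfield (k : ℝ → ℝ) : R7 → R7 :=
  fun p => ![0, 0, 0, k (p 0),
    -(p 3 / 2) * deriv k (p 0) * p 5,
    (p 3 / 2) * deriv k (p 0) * p 4,
    -(p 3 / 2) * deriv (deriv k) (p 0)]

namespace Stmt6Aux
open scoped ContDiff

noncomputable abbrev pr (i : Fin 7) : R7 →L[ℝ] ℝ := ContinuousLinearMap.proj i

lemma hCf (f : ℝ → ℝ) (hf : Differentiable ℝ f) (p : R7) :
    HasFDerivAt (fun x : R7 => f (x 0)) ((deriv f (p 0)) • pr 0) p :=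
  ((hf (p 0)).hasDerivAt).comp_hasFDerivAt p (hasFDerivAt_apply 0 p)

/-- derivative of x ↦ -(x a / 2) * c (x 0) * x b -/
lemma hNegProd (a b : Fin 7) (c : ℝ → ℝ) (hc : Differentiable ℝ c) (p : R7) :
    HasFDerivAt (fun x : R7 => -(x a / 2) * c (x 0) * x b)
      ((-(c (p 0) * p b / 2)) • pr a + (-(p a / 2) * deriv c (p 0) * p b) • pr 0
        + (-(p a / 2) * c (p 0)) • pr b) p := by
  have h := ((((hasFDerivAt_apply (𝕜 := ℝ) a p).mul_const (2⁻¹:ℝ)).neg.mul (hCf c hc p)).mul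
    (hasFDerivAt_apply b p))
  refine h.congr_fderiv ?_
  ext v
  simp [pr]
  ring

/-- derivative of x ↦ (x a / 2) * c (x 0) * x b -/
lemma hPosProd (a b : Fin 7) (c : ℝ → ℝ) (hc : Differentiable ℝ c) (p : R7) :
    HasFDerivAt (fun x : R7 => (x a / 2) * c (x 0) * x b)
      ((c (p 0) * p b / 2) • pr a + ((p a / 2) * deriv c (p 0) * p b) • pr 0
        + ((p a / 2) * c (p 0)) • pr b) p := by
  have h := ((((hasFDerivAt_apply (𝕜 := ℝ) a p).mul_const (2⁻¹:ℝ)).mul (hCf c hc p)).mul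
    (hasFDerivAt_apply b p))
  refine h.congr_fderiv ?_
  ext v
  simp [pr]
  ring

/-- derivative of x ↦ -(x a / 2) * c (x 0) -/
lemma hNegHalf (a : Fin 7) (c : ℝ → ℝ) (hc : Differentiable ℝ c) (p : R7) :
    HasFDerivAt (fun x : R7 => -(x a / 2) * c (x 0))
      ((-(c (p 0) / 2)) • pr a + (-(p a / 2) * deriv c (p 0)) • pr 0) p := by
  have h := (((hasFDerivAt_apply (𝕜 := ℝ) a p).mul_const (2⁻¹:ℝ)).neg.mul (hCf c hc p))
  refine h.congr_fderiv ?_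
  ext v
  simp [pr]
  ring

noncomputable def DX : R7 →L[ℝ] R7 :=
  ContinuousLinearMap.pi ![0, pr 3, 0, -pr 1, 0, 0, 0]

lemma hasF_X3 (p : R7) : HasFDerivAt X₃ DX p := by
  apply hasFDerivAt_pi''
  intro i
  fin_cases i <;>
    simp only [X₃, DX, ContinuousLinearMap.proj_pi, Fin.isValue, Matrix.cons_val_zero,
      Matrix.cons_val_one, Matrix.head_cons, Matrix.cons_val_two, Matrix.tail_cons,
      Matrix.cons_val_three, Matrix.cons_val_four, Matrix.cons_val_fin_one]
  · exact hasFDerivAt_const 0 p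
  · exact hasFDerivAt_apply 3 p
  · exact hasFDerivAt_const 0 p
  · exact (hasFDerivAt_apply 1 p).neg
  · exact hasFDerivAt_const 0 p
  · exact hasFDerivAt_const 0 p
  · exact hasFDerivAt_const 0 p

end Stmt6Aux

namespace Stmt6Aux
open scoped ContDiff

noncomputable def DY (g : ℝ → ℝ) (p : R7) : R7 →L[ℝ] R7 :=
  ContinuousLinearMap.pi ![0, deriv g (p 0) • pr 0, 0, 0,
    (-(deriv g (p 0) * p 5 / 2)) • pr 1 + (-(p 1 / 2) * deriv (deriv g) (p 0) * p 5) • pr 0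
      + (-(p 1 / 2) * deriv g (p 0)) • pr 5,
    (deriv g (p 0) * p 4 / 2) • pr 1 + ((p 1 / 2) * deriv (deriv g) (p 0) * p 4) • pr 0
      + ((p 1 / 2) * deriv g (p 0)) • pr 4,
    (-(deriv (deriv g) (p 0) / 2)) • pr 1 + (-(p 1 / 2) * deriv (deriv (deriv g)) (p 0)) • pr 0]

noncomputable def DQ (k : ℝ → ℝ) (p : R7) : R7 →L[ℝ] R7 :=
  ContinuousLinearMap.pi ![0, 0, 0, deriv k (p 0) • pr 0,
    (-(deriv k (p 0) * p 5 / 2)) • pr 3 + (-(p 3 / 2) * deriv (deriv k) (p 0) * p 5) • pr 0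
      + (-(p 3 / 2) * deriv k (p 0)) • pr 5,
    (deriv k (p 0) * p 4 / 2) • pr 3 + ((p 3 / 2) * deriv (deriv k) (p 0) * p 4) • pr 0
      + ((p 3 / 2) * deriv k (p 0)) • pr 4,
    (-(deriv (deriv k) (p 0) / 2)) • pr 3 + (-(p 3 / 2) * deriv (deriv (deriv k)) (p 0)) • pr 0]

lemma hasF_Y (g : ℝ → ℝ) (hg : ContDiff ℝ (⊤ : ℕ∞) g) (p : R7) : HasFDerivAt (Yfield g) (DY g p) p := by
  have h0 : ContDiff ℝ ∞ g := hg.of_le (by simp)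
  have h1 : ContDiff ℝ ∞ (deriv g) := (contDiff_infty_iff_deriv.mp h0).2
  have h2 : ContDiff ℝ ∞ (deriv (deriv g)) := (contDiff_infty_iff_deriv.mp h1).2
  apply hasFDerivAt_pi''
  intro i
  fin_cases i <;>
    simp only [Yfield, DY, ContinuousLinearMap.proj_pi, Fin.isValue, Matrix.cons_val_zero,
      Matrix.cons_val_one, Matrix.head_cons, Matrix.cons_val_two, Matrix.tail_cons,
      Matrix.cons_val_three, Matrix.cons_val_four]
  · exact hasFDerivAt_const 0 p
  · exact hCf g (h0.differentiable (by simp)) p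
  · exact hasFDerivAt_const 0 p
  · exact hasFDerivAt_const 0 p
  · exact hNegProd 1 5 (deriv g) (h1.differentiable (by simp)) p
  · exact hPosProd 1 4 (deriv g) (h1.differentiable (by simp)) p
  · exact hNegHalf 1 (deriv (deriv g)) (h2.differentiable (by simp)) p

lemma hasF_Q (k : ℝ → ℝ) (hk : ContDiff ℝ (⊤ : ℕ∞) k) (p : R7) : HasFDerivAt (Qfield k) (DQ k p) p := by
  have h0 : ContDiff ℝ ∞ k := hk.of_le (by simp)
  have h1 : ContDiff ℝ ∞ (deriv k) := (contDiff_infty_iff_deriv.mp h0).2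
  have h2 : ContDiff ℝ ∞ (deriv (deriv k)) := (contDiff_infty_iff_deriv.mp h1).2
  apply hasFDerivAt_pi''
  intro i
  fin_cases i <;>
    simp only [Qfield, DQ, ContinuousLinearMap.proj_pi, Fin.isValue, Matrix.cons_val_zero,
      Matrix.cons_val_one, Matrix.head_cons, Matrix.cons_val_two, Matrix.tail_cons,
      Matrix.cons_val_three, Matrix.cons_val_four]
  · exact hasFDerivAt_const 0 p
  · exact hasFDerivAt_const 0 p
  · exact hasFDerivAt_const 0 p
  · exact hCf k (h0.differentiable (by simp)) p
  · exact hNegProd 3 5 (deriv k) (h1.differentiable (by simp)) p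
  · exact hPosProd 3 4 (deriv k) (h1.differentiable (by simp)) p
  · exact hNegHalf 3 (deriv (deriv k)) (h2.differentiable (by simp)) p

lemma vec7_five {α : Type*} (a b c d e f g : α) : ![a,b,c,d,e,f,g] 5 = f := rfl
lemma vec7_six {α : Type*} (a b c d e f g : α) : ![a,b,c,d,e,f,g] 6 = g := rfl

end Stmt6Aux


set_option maxHeartbeats 1000000 in
open Stmt6Aux in
/-- [X₃, Y(g)] = Q(g) and [X₃, Q(k)] = -Y(k). -/
theorem stmt_6 (g k : ℝ → ℝ) (hg : ContDiff ℝ (⊤ : ℕ∞) g) (hk : ContDiff ℝ (⊤ : ℕ∞) k) :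
    lieBracket X₃ (Yfield g) = Qfield g ∧
    lieBracket X₃ (Qfield k) = fun p => -(Yfield k p) := by
  constructor
  · funext p
    simp only [lieBracket, (hasF_Y g hg p).fderiv, (hasF_X3 p).fderiv]
    funext i
    simp only [Pi.sub_apply, DY, DX, X₃, Yfield, Qfield, pr, ContinuousLinearMap.pi_apply]
    fin_cases i <;>
      simp [Stmt6Aux.vec7_five, Stmt6Aux.vec7_six, Matrix.cons_val_succ, ContinuousLinearMap.add_apply, ContinuousLinearMap.smul_apply,
        ContinuousLinearMap.proj_apply, ContinuousLinearMap.zero_apply,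
        ContinuousLinearMap.neg_apply, smul_eq_mul] <;> ring
  · funext p
    simp only [lieBracket, (hasF_Q k hk p).fderiv, (hasF_X3 p).fderiv]
    funext i
    simp only [Pi.sub_apply, DQ, DX, X₃, Yfield, Qfield, pr, ContinuousLinearMap.pi_apply,
      Pi.neg_apply]
    fin_cases i <;>
      simp [Stmt6Aux.vec7_five, Stmt6Aux.vec7_six, Matrix.cons_val_succ, ContinuousLinearMap.add_apply, ContinuousLinearMap.smul_apply,
        ContinuousLinearMap.proj_apply, ContinuousLinearMap.zero_apply,
        ContinuousLinearMap.neg_apply, smul_eq_mul] <;> ring
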